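/- arXiv:2501.05138 — 2 statements merged into one kernel-verified Lean document; each statement's English description precedes it below -/
import Mathlib

section
/- Let ≽ and ≽' be binary relations on a type α such that ≽' is a specificity refinement of ≽. Then for every set r ⊆ α, Best_{≻'}(r) ⊆ Best_{≻}(r), where ≻ and ≻' denote the strict parts of ≽ and ≽' respectively. (Paper's Lemma 2: Best_{≻_{XS}}(r) ⊆ Best_{≻_X}(r) for any t-relation r.) -/
/-- The strict part of a weak preference relation. -/
def strictPart {α : Type*} (R : α → α → Prop) (a b : α) : Prop :=
  R a b ∧ ¬ R b a

/-- The Best operator: elements of `r` not strictly dominated by any element of `r`. -/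
def Best {α : Type*} (P : α → α → Prop) (r : Set α) : Set α :=
  {a ∈ r | ¬ ∃ b ∈ r, P b a}

/-- `R'` is a specificity refinement of `R`. -/
def SpecRefinement {α : Type*} (R R' : α → α → Prop) : Prop :=
  (∀ a b, R' a b → R a b) ∧ (∀ a b, R a b → ¬ R' a b → R b a)

theorem Best_subset_of_le {α : Type*} {P Q : α → α → Prop} (hPQ : P ≤ Q) (r : Set α) :
    Best Q r ⊆ Best P r :=
  fun _ ⟨har, hnd⟩ => ⟨har, fun ⟨b, hbr, hba⟩ => hnd ⟨b, hbr, hPQ b _ hba⟩⟩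

theorem SpecRefinement.strictPart_le {α : Type*} {R R' : α → α → Prop}
    (h : SpecRefinement R R') : strictPart R ≤ strictPart R' := by
  rintro a b ⟨hab, hba⟩
  refine ⟨?_, fun h'ba => hba (h.1 b a h'ba)⟩
  by_contra h'ab
  exact hba (h.2 a b hab h'ab)

theorem stmt_0 {α : Type*} (R R' : α → α → Prop)
    (h : SpecRefinement R R') (r : Set α) :
    Best (strictPart R') r ⊆ Best (strictPart R) r :=
  Best_subset_of_le h.strictPart_le r
end

section
/- Let ≽ be a transitive binary relation on a type α, and let ≽' be a specificity refinement of ≽. Then the strict part of ≽ is contained in the strict part of Relation.TransGen ≽': for all a, b, if a ≽ b and ¬(b ≽ a), then Relation.TransGen ≽' a b and ¬(Relation.TransGen ≽' b a). (Paper's Proposition 1: ≻_{XT} ⊆ ≻_{XTST} for any initial preference relation.) -/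
namespace SpecRefinement

variable {α : Type*} {R R' : α → α → Prop}

theorem rel_of_transGen [IsTrans α R] (h : SpecRefinement R R') {a b : α}
    (hab : Relation.TransGen R' a b) : R a b := by
  rw [← Relation.transGen_eq_self (r := R)]
  exact Relation.TransGen.mono h.1 a b hab

theorem refined_of_strict (h : SpecRefinement R R') {a b : α} (hab : R a b)
    (hba : ¬ R b a) : R' a b :=
  not_not.mp fun hn => hba (h.2 a b hab hn)

end SpecRefinement

theorem stmt_4 {α : Type*} (R R' : α → α → Prop)
    (htrans : Transitive R) (h : SpecRefinement R R') :
    ∀ a b, R a b → ¬ R b a →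
      (Relation.TransGen R' a b ∧ ¬ Relation.TransGen R' b a) := by
  have : IsTrans α R := ⟨htrans⟩
  intro a b hab hba
  exact ⟨.single (h.refined_of_strict hab hba), fun hba' => hba (h.rel_of_transGen hba')⟩
end
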